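/- arXiv:1107.3869 — 5 statements merged into one kernel-verified Lean document; each statement's English description precedes it below -/
import Mathlib

section
/- Let X and Y be independent random variables. Suppose there exists φ: ℝ₊ → ℝ₊ with φ(u) → ∞, φ(u)/u → 0, P(|X| > φ(u)) = o(P(Y > u)), and P(Y > u - φ(u)) ~ P(Y > u + φ(u)) as u → ∞. Then P(X + Y > u) ~ P(Y > u) as u → ∞. -/
open MeasureTheory ProbabilityTheory Filter Asymptotics Topology

lemma aux_union_toReal {Ω : Type*} [MeasurableSpace Ω] (μ : Measure Ω)
    [IsProbabilityMeasure μ] {s t v : Set Ω} (h : s ⊆ t ∪ v) :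
    (μ s).toReal ≤ (μ t).toReal + (μ v).toReal := by
  have h1 : μ s ≤ μ t + μ v := (measure_mono h).trans (measure_union_le t v)
  have ht : μ t ≠ ⊤ := measure_ne_top μ t
  have hv : μ v ≠ ⊤ := measure_ne_top μ v
  calc (μ s).toReal ≤ (μ t + μ v).toReal :=
        ENNReal.toReal_mono (by finiteness) h1
    _ = (μ t).toReal + (μ v).toReal := ENNReal.toReal_add ht hv

theorem tail_sum_dominated_abs
    {Ω : Type*} [MeasurableSpace Ω] (μ : Measure Ω) [IsProbabilityMeasure μ]
    (X Y : Ω → ℝ) (hXm : Measurable X) (hYm : Measurable Y)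
    (hindep : IndepFun X Y μ)
    (φ : ℝ → ℝ) (hφnonneg : ∀ u, 0 ≤ φ u)
    (hφtop : Tendsto φ atTop atTop)
    (hφu : Tendsto (fun u => φ u / u) atTop (𝓝 0))
    (hφo : (fun u => (μ {ω | |X ω| > φ u}).toReal)
        =o[atTop] fun u => (μ {ω | Y ω > u}).toReal)
    (hφY : (fun u => (μ {ω | Y ω > u - φ u}).toReal)
        ~[atTop] fun u => (μ {ω | Y ω > u + φ u}).toReal) :
    (fun u => (μ {ω | X ω + Y ω > u}).toReal)
      ~[atTop] fun u => (μ {ω | Y ω > u}).toReal := by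
  set f : ℝ → ℝ := fun u => (μ {ω | X ω + Y ω > u}).toReal with hf
  set g : ℝ → ℝ := fun u => (μ {ω | Y ω > u}).toReal with hg
  set A : ℝ → ℝ := fun u => (μ {ω | Y ω > u - φ u}).toReal with hA
  set B : ℝ → ℝ := fun u => (μ {ω | Y ω > u + φ u}).toReal with hB
  set E : ℝ → ℝ := fun u => (μ {ω | |X ω| > φ u}).toReal with hE
  -- pointwise facts
  have hEnn : ∀ u, 0 ≤ E u := fun u => ENNReal.toReal_nonneg
  have hBg : ∀ u, B u ≤ g u := by
    intro u
    exact ENNReal.toReal_mono (measure_ne_top μ _)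
      (measure_mono (fun ω h => lt_of_le_of_lt (le_add_of_nonneg_right (hφnonneg u)) h))
  have hgA : ∀ u, g u ≤ A u := by
    intro u
    refine ENNReal.toReal_mono (measure_ne_top μ _) (measure_mono ?_)
    intro ω h
    simp only [Set.mem_setOf_eq] at h ⊢
    linarith [hφnonneg u]
  have hfEA : ∀ u, f u ≤ E u + A u := by
    intro u
    refine aux_union_toReal μ ?_
    intro ω h
    simp only [Set.mem_setOf_eq, Set.mem_union]
    by_cases hx : |X ω| > φ u
    · exact Or.inl hx
    · push_neg at hx
      have := abs_le.mp hx
      right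
      simp only [Set.mem_setOf_eq] at h ⊢
      linarith
  have hBfE : ∀ u, B u ≤ f u + E u := by
    intro u
    refine aux_union_toReal μ ?_
    intro ω h
    simp only [Set.mem_setOf_eq, Set.mem_union]
    by_cases hx : |X ω| > φ u
    · exact Or.inr hx
    · push_neg at hx
      have := abs_le.mp hx
      left
      simp only [Set.mem_setOf_eq] at h ⊢
      linarith
  -- little-o facts
  have hABo : (fun u => A u - B u) =o[atTop] g := by
    have h1 : (fun u => A u - B u) =o[atTop] B := hφY
    refine h1.trans_isBigO (IsBigO.of_bound 1 ?_)
    filter_upwards with u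
    rw [one_mul, Real.norm_eq_abs, Real.norm_eq_abs,
      abs_of_nonneg ENNReal.toReal_nonneg, abs_of_nonneg ENNReal.toReal_nonneg]
    exact hBg u
  have hsum : (fun u => E u + (A u - B u)) =o[atTop] g := hφo.add hABo
  have hfg : (fun u => f u - g u) =O[atTop] (fun u => E u + (A u - B u)) := by
    refine IsBigO.of_bound 1 ?_
    filter_upwards with u
    rw [one_mul, Real.norm_eq_abs, Real.norm_eq_abs]
    have hAB : 0 ≤ A u - B u := by linarith [hBg u, hgA u]
    have hR : |E u + (A u - B u)| = E u + (A u - B u) :=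
      abs_of_nonneg (by linarith [hEnn u])
    rw [hR, abs_le]
    constructor
    · linarith [hBfE u, hgA u]
    · linarith [hfEA u, hBg u]
  exact hfg.trans_isLittleO hsum
end

section
/- Let X > 0 and Y > 0 be independent random variables with P(Y > u) ~ C_Y u^{-α} as u → ∞ for constants C_Y, α > 0. Assume E[X^α] < ∞ and there exists φ: ℝ₊ → ℝ₊ with φ(u) → ∞, φ(u)/u → 0, and P(X > φ(u)) = o(u^{-α}). Then P(XY > u) ~ C_Y E[X^α] u^{-α} as u → ∞. -/
open MeasureTheory ProbabilityTheory Filter Asymptotics Topology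

theorem tail_product_power
    {Ω : Type*} [MeasurableSpace Ω] (μ : Measure Ω) [IsProbabilityMeasure μ]
    (X Y : Ω → ℝ) (hXm : Measurable X) (hYm : Measurable Y)
    (hindep : IndepFun X Y μ)
    (hXpos : ∀ᵐ ω ∂μ, 0 < X ω) (hYpos : ∀ᵐ ω ∂μ, 0 < Y ω)
    (CY α : ℝ) (hCY : 0 < CY) (hα : 0 < α)
    (hY : (fun u => (μ {ω | Y ω > u}).toReal) ~[atTop] fun u => CY * u ^ (-α))
    (hmom : Integrable (fun ω => X ω ^ α) μ)
    (φ : ℝ → ℝ) (hφnonneg : ∀ u, 0 ≤ φ u)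
    (hφtop : Tendsto φ atTop atTop)
    (hφu : Tendsto (fun u => φ u / u) atTop (𝓝 0))
    (hφo : (fun u => (μ {ω | X ω > φ u}).toReal) =o[atTop] fun u : ℝ => u ^ (-α)) :
    (fun u => (μ {ω | X ω * Y ω > u}).toReal)
      ~[atTop] fun u => CY * (∫ ω, X ω ^ α ∂μ) * u ^ (-α) := by
  classical
  set ν := μ.map X with hνdef
  set ρ := μ.map Y with hρdef
  have hνprob : IsProbabilityMeasure ν := Measure.isProbabilityMeasure_map hXm.aemeasurable
  have hρprob : IsProbabilityMeasure ρ := Measure.isProbabilityMeasure_map hYm.aemeasurable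
  have hprod : μ.map (fun ω => (X ω, Y ω)) = ν.prod ρ :=
    (indepFun_iff_map_prod_eq_prod_map_map hXm.aemeasurable hYm.aemeasurable).mp hindep
  set E := ∫ ω, X ω ^ α ∂μ with hEdef
  -- positivity of the moment
  have hEpos : 0 < E := by
    rw [hEdef]
    rw [integral_pos_iff_support_of_nonneg_ae]
    · have hsub : {ω | 0 < X ω} ⊆ Function.support fun ω => X ω ^ α := by
        intro ω hω
        exact (Real.rpow_pos_of_pos hω α).ne'
      have hX1 : μ {ω | 0 < X ω} = 1 := by
        rw [measure_congr (Filter.eventuallyEq_univ.mpr hXpos), measure_univ]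
      have h1 : (1 : ENNReal) ≤ μ (Function.support fun ω => X ω ^ α) := by
        rw [← hX1]
        exact measure_mono hsub
      exact lt_of_lt_of_le (by norm_num) h1
    · filter_upwards [hXpos] with ω hω
      exact (Real.rpow_pos_of_pos hω α).le
    · exact hmom
  -- the tail of Y
  set T : ℝ → ℝ := fun v => (μ {ω | Y ω > v}).toReal with hTdef
  have hTρ : ∀ v, ρ (Set.Ioi v) = μ {ω | Y ω > v} := by
    intro v
    rw [hρdef, Measure.map_apply hYm measurableSet_Ioi]
    rfl
  -- ratio tendsto 1
  have hnz : ∀ᶠ v : ℝ in atTop, CY * v ^ (-α) ≠ 0 := by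
    filter_upwards [eventually_gt_atTop (0:ℝ)] with v hv
    exact (mul_pos hCY (Real.rpow_pos_of_pos hv _)).ne'
  have hrat : Tendsto (fun v => T v / (CY * v ^ (-α))) atTop (𝓝 1) := by
    have h := (isEquivalent_iff_tendsto_one hnz).mp hY
    exact h
  -- tail bound
  have hbd : ∀ᶠ v : ℝ in atTop, T v ≤ 2 * (CY * v ^ (-α)) := by
    have h2 : ∀ᶠ v in atTop, T v / (CY * v ^ (-α)) ≤ 2 :=
      hrat.eventually (eventually_le_nhds (by norm_num))
    filter_upwards [h2, eventually_gt_atTop (0:ℝ)] with v hv hv0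
    have hden : 0 < CY * v ^ (-α) := mul_pos hCY (Real.rpow_pos_of_pos hv0 _)
    calc T v = T v / (CY * v ^ (-α)) * (CY * v ^ (-α)) := by field_simp
    _ ≤ 2 * (CY * v ^ (-α)) := mul_le_mul_of_nonneg_right hv hden.le
  obtain ⟨v₀, hv₀⟩ := hbd.exists_forall_of_atTop
  set v₁ := max v₀ 1 with hv₁def
  have hv₁pos : (0:ℝ) < v₁ := lt_of_lt_of_le one_pos (le_max_right _ _)
  have hv₁bd : ∀ v ≥ v₁, T v ≤ 2 * (CY * v ^ (-α)) := fun v hv =>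
    hv₀ v (le_trans (le_max_left _ _) hv)
  -- the product-space sets
  set s : ℝ → Set (ℝ × ℝ) := fun u => {p : ℝ × ℝ | p.1 * p.2 > u ∧ p.1 ≤ φ u} with hsdef
  have hsm : ∀ u, MeasurableSet (s u) := by
    intro u
    rw [hsdef]
    exact (measurableSet_lt measurable_const (measurable_fst.mul measurable_snd)).inter
      (measurableSet_le measurable_fst measurable_const)
  set F : ℝ → ℝ → ℝ := fun u x => (ρ (Prod.mk x ⁻¹' s u)).toReal with hFdef
  have hFm : ∀ u, Measurable (F u) := fun u =>
    (measurable_measure_prodMk_left (hsm u)).ennreal_toReal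
  have hFnonneg : ∀ u x, 0 ≤ F u x := fun u x => ENNReal.toReal_nonneg
  -- the slice identity
  have hslice : ∀ u x, 0 < x → x ≤ φ u → F u x = T (u / x) := by
    intro u x hx hxφ
    have hset : Prod.mk x ⁻¹' s u = Set.Ioi (u / x) := by
      ext y
      simp only [hsdef, Set.mem_preimage, Set.mem_setOf_eq, Set.mem_Ioi, gt_iff_lt]
      constructor
      · rintro ⟨h1, _⟩
        exact (div_lt_iff₀ hx).mpr (by linarith [mul_comm x y])
      · intro h
        exact ⟨by have := (div_lt_iff₀ hx).mp h; linarith [mul_comm y x], hxφ⟩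
    rw [hFdef]
    simp only [hset, hTρ, hTdef]
  have hslice0 : ∀ u x, ¬ x ≤ φ u → F u x = 0 := by
    intro u x hxφ
    have hset : Prod.mk x ⁻¹' s u = ∅ := by
      ext y; simp [hsdef, hxφ]
    simp [hFdef, hset]
  -- A u = ∫ F u dν
  have hA : ∀ u, (μ {ω | X ω * Y ω > u ∧ X ω ≤ φ u}).toReal = ∫ x, F u x ∂ν := by
    intro u
    have h1 : {ω | X ω * Y ω > u ∧ X ω ≤ φ u} = (fun ω => (X ω, Y ω)) ⁻¹' s u := by
      rw [hsdef]; rfl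
    have h2 : μ ((fun ω => (X ω, Y ω)) ⁻¹' s u) = (ν.prod ρ) (s u) := by
      rw [← hprod, Measure.map_apply (hXm.prodMk hYm) (hsm u)]
    rw [h1, h2, Measure.prod_apply (hsm u), hFdef]
    rw [integral_toReal]
    · exact (measurable_measure_prodMk_left (hsm u)).aemeasurable
    · exact ae_of_all _ fun x => lt_of_le_of_lt prob_le_one (by norm_num)
  -- a.e. positivity on ν
  have hνpos : ∀ᵐ x ∂ν, 0 < x := by
    rw [hνdef, ae_map_iff hXm.aemeasurable measurableSet_Ioi]
    exact hXpos
  -- pointwise limit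
  have hpt : ∀ x : ℝ, 0 < x →
      Tendsto (fun u => u ^ α * F u x) atTop (𝓝 (CY * x ^ α)) := by
    intro x hx
    have hux : Tendsto (fun u : ℝ => u / x) atTop atTop :=
      Tendsto.atTop_div_const hx tendsto_id
    have hcomp : Tendsto (fun u => T (u / x) / (CY * (u / x) ^ (-α))) atTop (𝓝 1) :=
      hrat.comp hux
    have hlim : Tendsto (fun u => T (u / x) / (CY * (u / x) ^ (-α)) * (CY * x ^ α))
        atTop (𝓝 (CY * x ^ α)) := by
      have h := hcomp.mul_const (CY * x ^ α)
      simpa using h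
    refine hlim.congr' ?_
    filter_upwards [eventually_gt_atTop (0:ℝ), hφtop.eventually_ge_atTop x] with u hu hxu
    have hFx : F u x = T (u / x) := hslice u x hx hxu
    have hxα : (0:ℝ) < x ^ α := Real.rpow_pos_of_pos hx _
    have huα : (0:ℝ) < u ^ α := Real.rpow_pos_of_pos hu _
    have hpow : (u / x) ^ (-α) = x ^ α / u ^ α := by
      rw [Real.rpow_neg (div_nonneg hu.le hx.le), Real.div_rpow hu.le hx.le, inv_div]
    rw [hFx, hpow]
    have hCY' : CY ≠ 0 := hCY.ne'
    have hxα' : x ^ α ≠ 0 := hxα.ne'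
    have huα' : u ^ α ≠ 0 := huα.ne'
    field_simp
  -- integrable bound
  have hboundInt : Integrable (fun x : ℝ => 2 * CY * x ^ α) ν := by
    have h1 : Integrable (fun x : ℝ => x ^ α) ν := by
      rw [hνdef]
      rw [integrable_map_measure (by fun_prop) hXm.aemeasurable]
      exact hmom
    exact h1.const_mul _
  -- dominated convergence
  have hAint : Tendsto (fun u => ∫ x, u ^ α * F u x ∂ν) atTop
      (𝓝 (∫ x, CY * x ^ α ∂ν)) := by
    refine tendsto_integral_filter_of_dominated_convergence (fun x => 2 * CY * x ^ α)
      ?_ ?_ hboundInt ?_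
    · exact Eventually.of_forall fun u => ((hFm u).const_mul _).aestronglyMeasurable
    · have hsmall : ∀ᶠ u : ℝ in atTop, φ u / u < v₁⁻¹ :=
        hφu.eventually (eventually_lt_nhds (by positivity))
      filter_upwards [eventually_gt_atTop (0:ℝ), hsmall] with u hu hsm'
      filter_upwards [hνpos] with x hx
      have huα : (0:ℝ) < u ^ α := Real.rpow_pos_of_pos hu _
      have hxα : (0:ℝ) < x ^ α := Real.rpow_pos_of_pos hx _
      rw [Real.norm_of_nonneg (mul_nonneg huα.le (hFnonneg u x))]
      by_cases hxφ : x ≤ φ u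
      · have hφpos : 0 < φ u := lt_of_lt_of_le hx hxφ
        have h1 : v₁ < u / φ u := by
          rw [lt_div_iff₀ hφpos]
          have h := (div_lt_iff₀ hu).mp hsm'
          calc v₁ * φ u = φ u * v₁ := mul_comm _ _
          _ < v₁⁻¹ * u * v₁ := mul_lt_mul_of_pos_right h hv₁pos
          _ = u := by field_simp
        have h2 : u / φ u ≤ u / x := div_le_div_of_nonneg_left hu.le hx hxφ
        have h3 : v₁ ≤ u / x := le_trans h1.le (le_trans le_rfl h2)
        have hF : F u x = T (u / x) := hslice u x hx hxφ
        have h4 : T (u / x) ≤ 2 * (CY * (u / x) ^ (-α)) := hv₁bd _ h3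
        have hpow : (u / x) ^ (-α) = x ^ α / u ^ α := by
          rw [Real.rpow_neg (div_nonneg hu.le hx.le), Real.div_rpow hu.le hx.le, inv_div]
        rw [hF]
        calc u ^ α * T (u / x) ≤ u ^ α * (2 * (CY * (u / x) ^ (-α))) :=
              mul_le_mul_of_nonneg_left h4 huα.le
        _ = 2 * CY * x ^ α := by
              rw [hpow]
              field_simp
      · rw [hslice0 u x hxφ, mul_zero]
        positivity
    · filter_upwards [hνpos] with x hx
      exact hpt x hx
  -- value of the limit integral
  have hlimval : ∫ x, CY * x ^ α ∂ν = CY * E := by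
    rw [integral_const_mul]
    congr 1
    rw [hνdef, integral_map hXm.aemeasurable (by fun_prop)]
  -- A tendsto
  have hAt : Tendsto (fun u => u ^ α * (μ {ω | X ω * Y ω > u ∧ X ω ≤ φ u}).toReal)
      atTop (𝓝 (CY * E)) := by
    rw [← hlimval]
    exact hAint.congr fun u => by rw [integral_const_mul, ← hA u]
  -- B part
  set B : ℝ → ℝ := fun u => (μ {ω | X ω * Y ω > u ∧ X ω > φ u}).toReal with hBdef
  have hBo : B =o[atTop] fun u : ℝ => u ^ (-α) := by
    refine (isBigO_of_le atTop ?_).trans_isLittleO hφo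
    intro u
    rw [Real.norm_of_nonneg ENNReal.toReal_nonneg, Real.norm_of_nonneg ENNReal.toReal_nonneg]
    exact ENNReal.toReal_mono (measure_ne_top μ _) (measure_mono fun ω hω => hω.2)
  have hBt : Tendsto (fun u => u ^ α * B u) atTop (𝓝 0) := by
    refine hBo.tendsto_div_nhds_zero.congr' ?_
    filter_upwards [eventually_gt_atTop (0:ℝ)] with u hu
    rw [Real.rpow_neg hu.le, div_eq_mul_inv, inv_inv, mul_comm]
  -- splitting
  have hsplit : ∀ u, (μ {ω | X ω * Y ω > u}).toReal
      = (μ {ω | X ω * Y ω > u ∧ X ω ≤ φ u}).toReal + B u := by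
    intro u
    have hset : {ω | X ω * Y ω > u}
        = {ω | X ω * Y ω > u ∧ X ω ≤ φ u} ∪ {ω | X ω * Y ω > u ∧ X ω > φ u} := by
      ext ω
      simp only [Set.mem_setOf_eq, Set.mem_union]
      constructor
      · intro h
        rcases le_or_gt (X ω) (φ u) with h' | h'
        · exact Or.inl ⟨h, h'⟩
        · exact Or.inr ⟨h, h'⟩
      · rintro (⟨h, _⟩ | ⟨h, _⟩) <;> exact h
    have hdisj : Disjoint {ω | X ω * Y ω > u ∧ X ω ≤ φ u}
        {ω | X ω * Y ω > u ∧ X ω > φ u} := by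
      rw [Set.disjoint_left]
      rintro ω ⟨_, h1⟩ ⟨_, h2⟩
      exact absurd h1 (not_le.mpr h2)
    have hm2 : MeasurableSet {ω | X ω * Y ω > u ∧ X ω > φ u} :=
      (measurableSet_lt measurable_const (hXm.mul hYm)).inter
        (measurableSet_lt measurable_const hXm)
    rw [hset, measure_union hdisj hm2,
      ENNReal.toReal_add (measure_ne_top μ _) (measure_ne_top μ _)]
  -- conclusion
  rw [isEquivalent_iff_tendsto_one]
  swap
  · filter_upwards [eventually_gt_atTop (0:ℝ)] with u hu
    exact (mul_pos (mul_pos hCY hEpos) (Real.rpow_pos_of_pos hu _)).ne'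
  have hkey : Tendsto (fun u => u ^ α * (μ {ω | X ω * Y ω > u}).toReal) atTop
      (𝓝 (CY * E)) := by
    have h := hAt.add hBt
    rw [add_zero] at h
    refine h.congr fun u => ?_
    rw [hsplit u, mul_add]
  have hCE : (CY * E) ≠ 0 := (mul_pos hCY hEpos).ne'
  have hfin := hkey.div_const (CY * E)
  rw [div_self hCE] at hfin
  refine hfin.congr' ?_
  filter_upwards [eventually_gt_atTop (0:ℝ)] with u hu
  have huα : (0:ℝ) < u ^ α := Real.rpow_pos_of_pos hu _
  simp only [Pi.div_apply]
  rw [Real.rpow_neg hu.le]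
  field_simp
end

section
/- Suppose a process Y = (Y(t), t > 0) of the form Y(t) = t^{-H} X(t), where X is self-similar with Hurst parameter H and E[X(t)] = 0, E[X(t)²] = t^{2H}, is locally stationary at a point s₀ > 0 with index α and limit constant D(s₀). Then Y is locally stationary at every point s > 0 with the same index α and limit constant D(s) = (s₀/s)^α D(s₀). -/
/-!
Self-similarity makes the mean-square increment of `Y(t) = t^{-H} X(t)` invariant under
`(t, t') ↦ (b t, b t')`, while `|t - t'|^α` picks up the factor `b^α`. Taking `b = s₀ / s`, the
dilation carries a punctured neighbourhood of `(s, s)` into one of `(s₀, s₀)`, so the limit at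
`(s, s)` is `(s₀ / s)^α` times the limit at `(s₀, s₀)`.
-/

open MeasureTheory Filter Topology

def posOffDiag : Set (ℝ × ℝ) := {p | 0 < p.1 ∧ 0 < p.2 ∧ p.1 ≠ p.2}

theorem smul_mem_posOffDiag {b : ℝ} (hb : 0 < b) {p : ℝ × ℝ} (hp : p ∈ posOffDiag) :
    b • p ∈ posOffDiag :=
  ⟨mul_pos hb hp.1, mul_pos hb hp.2.1, fun h => hp.2.2 (mul_left_cancel₀ hb.ne' h)⟩

theorem Real.mul_rpow_neg_mul_rpow {a t : ℝ} (ha : 0 < a) (ht : 0 ≤ t) (H : ℝ) :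
    (a * t) ^ (-H) * a ^ H = t ^ (-H) := by
  rw [Real.mul_rpow ha.le ht, mul_right_comm, ← Real.rpow_add ha, neg_add_cancel,
    Real.rpow_zero, one_mul]

section SelfSimilar

variable {Ω : Type*} [MeasurableSpace Ω] {μ : Measure Ω} {X : ℝ → Ω → ℝ} {H : ℝ}

def IsSelfSimilar (μ : Measure Ω) (X : ℝ → Ω → ℝ) (H : ℝ) : Prop :=
  ∀ a > (0:ℝ), ∀ (n : ℕ) (t : Fin n → ℝ),
    Measure.map (fun ω i => X (a * t i) ω) μ = Measure.map (fun ω i => a ^ H * X (t i) ω) μ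

/-- `E[(Y(t) - Y(t'))²]` for the normalized process `Y(t) = t^{-H} X(t)`. -/
noncomputable def meanSqIncrement (μ : Measure Ω) (X : ℝ → Ω → ℝ) (H t t' : ℝ) : ℝ :=
  ∫ ω, (t ^ (-H) * X t ω - t' ^ (-H) * X t' ω) ^ 2 ∂μ

theorem IsSelfSimilar.integral_comp (hX : IsSelfSimilar μ X H) (hXm : ∀ t, Measurable (X t))
    {a : ℝ} (ha : 0 < a) {n : ℕ} (t : Fin n → ℝ) {g : (Fin n → ℝ) → ℝ} (hg : Measurable g) :
    ∫ ω, g (fun i => X (a * t i) ω) ∂μ = ∫ ω, g (fun i => a ^ H * X (t i) ω) ∂μ := by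
  have hmeas₁ : Measurable fun ω i => X (a * t i) ω := measurable_pi_lambda _ fun _ => hXm _
  have hmeas₂ : Measurable fun ω i => a ^ H * X (t i) ω :=
    measurable_pi_lambda _ fun _ => (hXm _).const_mul _
  rw [← integral_map hmeas₁.aemeasurable hg.aestronglyMeasurable, hX a ha n t,
    integral_map hmeas₂.aemeasurable hg.aestronglyMeasurable]

theorem IsSelfSimilar.meanSqIncrement_mul (hX : IsSelfSimilar μ X H)
    (hXm : ∀ t, Measurable (X t)) {a t₁ t₂ : ℝ} (ha : 0 < a) (ht₁ : 0 ≤ t₁) (ht₂ : 0 ≤ t₂) :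
    meanSqIncrement μ X H (a * t₁) (a * t₂) = meanSqIncrement μ X H t₁ t₂ := by
  have h := hX.integral_comp hXm ha ![t₁, t₂]
    (g := fun v => ((a * t₁) ^ (-H) * v 0 - (a * t₂) ^ (-H) * v 1) ^ 2) (by fun_prop)
  simp only [Matrix.cons_val_zero, Matrix.cons_val_one] at h
  rw [meanSqIncrement, h, meanSqIncrement]
  congr 1 with ω
  rw [← Real.mul_rpow_neg_mul_rpow ha ht₁ H, ← Real.mul_rpow_neg_mul_rpow ha ht₂ H]
  ring

theorem IsSelfSimilar.meanSqIncrement_div_smul (hX : IsSelfSimilar μ X H)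
    (hXm : ∀ t, Measurable (X t)) {b : ℝ} (hb : 0 < b) (α : ℝ) {p : ℝ × ℝ}
    (hp : p ∈ posOffDiag) :
    b ^ α * (meanSqIncrement μ X H (b • p).1 (b • p).2 / |(b • p).1 - (b • p).2| ^ α)
      = meanSqIncrement μ X H p.1 p.2 / |p.1 - p.2| ^ α := by
  have hpos : 0 < |p.1 - p.2| := abs_pos.mpr (sub_ne_zero.mpr hp.2.2)
  have habs : |b * p.1 - b * p.2| ^ α = b ^ α * |p.1 - p.2| ^ α := by
    rw [← mul_sub, abs_mul, abs_of_pos hb, Real.mul_rpow hb.le hpos.le]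
  simp only [Prod.smul_fst, Prod.smul_snd, smul_eq_mul]
  rw [hX.meanSqIncrement_mul hXm hb hp.1.le hp.2.1.le, habs, ← mul_div_assoc,
    mul_div_mul_left _ _ (Real.rpow_pos_of_pos hb α).ne']

end SelfSimilar

theorem locally_stationary_everywhere_of_selfsimilar_general
    {Ω : Type*} [MeasurableSpace Ω] (μ : Measure Ω)
    (X : ℝ → Ω → ℝ) (hXm : ∀ t, Measurable (X t))
    (H : ℝ)
    (hss : ∀ a > (0:ℝ), ∀ (n : ℕ) (t : Fin n → ℝ),
      Measure.map (fun ω i => X (a * t i) ω) μ =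
        Measure.map (fun ω i => a ^ H * X (t i) ω) μ)
    (α : ℝ)
    (s₀ D₀ : ℝ) (hs₀ : 0 < s₀)
    (hloc : Tendsto
      (fun p : ℝ × ℝ =>
        (∫ ω, (p.1 ^ (-H) * X p.1 ω - p.2 ^ (-H) * X p.2 ω) ^ 2 ∂μ) / |p.1 - p.2| ^ α)
      (𝓝[{p : ℝ × ℝ | 0 < p.1 ∧ 0 < p.2 ∧ p.1 ≠ p.2}] (s₀, s₀)) (𝓝 D₀)) :
    ∀ s > (0:ℝ), Tendsto
      (fun p : ℝ × ℝ =>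
        (∫ ω, (p.1 ^ (-H) * X p.1 ω - p.2 ^ (-H) * X p.2 ω) ^ 2 ∂μ) / |p.1 - p.2| ^ α)
      (𝓝[{p : ℝ × ℝ | 0 < p.1 ∧ 0 < p.2 ∧ p.1 ≠ p.2}] (s, s))
      (𝓝 ((s₀ / s) ^ α * D₀)) := by
  intro s hs
  have hb : 0 < s₀ / s := div_pos hs₀ hs
  have hdilate : Tendsto ((s₀ / s) • ·) (𝓝[posOffDiag] (s, s)) (𝓝[posOffDiag] (s₀, s₀)) := by
    have h := (continuous_const_smul (s₀ / s)).continuousWithinAt.tendsto_nhdsWithin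
      (x := (s, s)) fun _ hp => smul_mem_posOffDiag hb hp
    rwa [Prod.smul_mk, smul_eq_mul, div_mul_cancel₀ _ hs.ne'] at h
  refine ((hloc.comp hdilate).const_mul _).congr' ?_
  filter_upwards [self_mem_nhdsWithin] with p hp
  exact IsSelfSimilar.meanSqIncrement_div_smul hss hXm hb α hp

theorem locally_stationary_everywhere_of_selfsimilar
    {Ω : Type*} [MeasurableSpace Ω] (μ : Measure Ω) [IsProbabilityMeasure μ]
    (X : ℝ → Ω → ℝ) (hXm : ∀ t, Measurable (X t))
    (hL2 : ∀ t, MemLp (X t) 2 μ)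
    (H : ℝ) (hH : H ∈ Set.Ioo (0:ℝ) 1)
    (hcent : ∀ t ≥ (0:ℝ), ∫ ω, X t ω ∂μ = 0)
    (hvar : ∀ t ≥ (0:ℝ), ∫ ω, (X t ω) ^ 2 ∂μ = t ^ (2 * H))
    (hss : ∀ a > (0:ℝ), ∀ (n : ℕ) (t : Fin n → ℝ),
      Measure.map (fun ω i => X (a * t i) ω) μ =
        Measure.map (fun ω i => a ^ H * X (t i) ω) μ)
    (α : ℝ) (hα : α ∈ Set.Ioc (0:ℝ) 2)
    (s₀ D₀ : ℝ) (hs₀ : 0 < s₀) (hD₀ : 0 < D₀)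
    (hloc : Tendsto
      (fun p : ℝ × ℝ =>
        (∫ ω, (p.1 ^ (-H) * X p.1 ω - p.2 ^ (-H) * X p.2 ω) ^ 2 ∂μ) / |p.1 - p.2| ^ α)
      (𝓝[{p : ℝ × ℝ | 0 < p.1 ∧ 0 < p.2 ∧ p.1 ≠ p.2}] (s₀, s₀)) (𝓝 D₀)) :
    ∀ s > (0:ℝ), Tendsto
      (fun p : ℝ × ℝ =>
        (∫ ω, (p.1 ^ (-H) * X p.1 ω - p.2 ^ (-H) * X p.2 ω) ^ 2 ∂μ) / |p.1 - p.2| ^ α)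
      (𝓝[{p : ℝ × ℝ | 0 < p.1 ∧ 0 < p.2 ∧ p.1 ≠ p.2}] (s, s))
      (𝓝 ((s₀ / s) ^ α * D₀)) :=
  locally_stationary_everywhere_of_selfsimilar_general μ X hXm H hss α s₀ D₀ hs₀ hloc
end

section
/- Let X be a random variable with ess sup X = +∞ whose distribution on some neighborhood (u₀, ∞) has a Lebesgue density f_X satisfying f_X(u) ~ C_X u^β exp(-K_X u^α) as u → ∞, with constants C_X, α, K_X > 0, β ∈ ℝ. Then P(X > u) ~ C_X α^{-1} K_X^{-1} u^{β + 1 - α} exp(-K_X u^α) as u → ∞. -/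
/-!
The tail `P(X > u)` is the integral of `fX` over `(u, ∞)`, and asymptotic equivalence of
integrands that are nonnegative and integrable at infinity passes to their tail integrals, so
`fX` may be replaced by `g t = C t^β exp(-K t^α)`. The explicit function
`G u = C α⁻¹ K⁻¹ u^(β+1-α) exp(-K u^α)` tends to `0` and `-G' = g - (lower order term) ~ g`,
hence `∫_u^∞ g ~ ∫_u^∞ -G' = G u`.
-/

open MeasureTheory Filter Asymptotics Set Real Topology

theorem tendsto_rpow_mul_exp_neg_mul_rpow_atTop_nhds_zero (s : ℝ) {K α : ℝ} (hK : 0 < K)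
    (hα : 0 < α) : Tendsto (fun t : ℝ => t ^ s * exp (-K * t ^ α)) atTop (𝓝 0) := by
  refine ((tendsto_rpow_mul_exp_neg_mul_atTop_nhds_zero (s / α) K hK).comp
    (tendsto_rpow_atTop hα)).congr' ?_
  filter_upwards [eventually_gt_atTop 0] with t ht
  rw [Function.comp_apply, ← rpow_mul ht.le, mul_div_cancel₀ s hα.ne']

theorem integrableAtFilter_mul_rpow_mul_exp_neg_mul_rpow (c q : ℝ) {K α : ℝ} (hK : 0 < K)
    (hα : 0 < α) :
    IntegrableAtFilter (fun t : ℝ => c * t ^ q * exp (-K * t ^ α)) atTop := by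
  have hO : (fun t : ℝ => c * t ^ q * exp (-K * t ^ α)) =o[atTop] fun t => t ^ (-2 : ℝ) := by
    refine (isLittleO_iff_tendsto' ?_).2 ?_
    · filter_upwards [eventually_gt_atTop 0] with t ht h
      exact absurd h (rpow_pos_of_pos ht _).ne'
    · have h := (tendsto_rpow_mul_exp_neg_mul_rpow_atTop_nhds_zero (q + 2) hK hα).const_mul c
      rw [mul_zero] at h
      refine h.congr' ?_
      filter_upwards [eventually_gt_atTop 0] with t ht
      rw [rpow_neg ht.le, div_inv_eq_mul, rpow_add ht]
      ring
  have hint : IntegrableAtFilter (fun t : ℝ => t ^ (-2 : ℝ)) atTop :=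
    ⟨Ioi 1, Ioi_mem_atTop 1, integrableOn_Ioi_rpow_of_lt (by norm_num) one_pos⟩
  exact hO.isBigO.integrableAtFilter
    (by fun_prop : Measurable _).aestronglyMeasurable.stronglyMeasurableAtFilter hint

theorem MeasureTheory.IntegrableAtFilter.eventually_integrableOn_Ioi {μ : Measure ℝ} {f : ℝ → ℝ}
    (hf : IntegrableAtFilter f atTop μ) : ∀ᶠ u in atTop, IntegrableOn f (Ioi u) μ := by
  obtain ⟨a, ha⟩ := integrableAtFilter_atTop_iff.1 hf
  filter_upwards [eventually_ge_atTop a] with u hu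
  exact ha.mono_set (Ioi_subset_Ici hu)

theorem Asymptotics.IsLittleO.integral_Ioi {μ : Measure ℝ} {f g : ℝ → ℝ} (hfg : f =o[atTop] g)
    (hg : 0 ≤ᶠ[atTop] g) (hgi : IntegrableAtFilter g atTop μ) :
    (fun u => ∫ t in Ioi u, f t ∂μ) =o[atTop] fun u => ∫ t in Ioi u, g t ∂μ := by
  refine isLittleO_iff.2 fun ε hε => ?_
  obtain ⟨a, ha⟩ := eventually_atTop.1 ((isLittleO_iff.1 hfg hε).and hg)
  filter_upwards [eventually_ge_atTop a, hgi.eventually_integrableOn_Ioi] with u hu hgu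
  have hbound : ∀ t ∈ Ioi u, ‖f t‖ ≤ ε * g t ∧ 0 ≤ g t := fun t ht => by
    obtain ⟨hfg, hg⟩ := ha t (hu.trans ht.le)
    exact ⟨by rwa [Real.norm_of_nonneg hg] at hfg, hg⟩
  have hGnn : 0 ≤ ∫ t in Ioi u, g t ∂μ :=
    setIntegral_nonneg measurableSet_Ioi fun t ht => (hbound t ht).2
  calc ‖∫ t in Ioi u, f t ∂μ‖ ≤ ∫ t in Ioi u, ε * g t ∂μ :=
        norm_integral_le_of_norm_le (hgu.const_mul ε)
          ((ae_restrict_mem measurableSet_Ioi).mono fun t ht => (hbound t ht).1)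
    _ = ε * ‖∫ t in Ioi u, g t ∂μ‖ := by
        rw [integral_const_mul, Real.norm_of_nonneg hGnn]

theorem Asymptotics.IsEquivalent.integral_Ioi {μ : Measure ℝ} {f g : ℝ → ℝ} (hfg : f ~[atTop] g)
    (hg : 0 ≤ᶠ[atTop] g) (hfi : IntegrableAtFilter f atTop μ) (hgi : IntegrableAtFilter g atTop μ) :
    (fun u => ∫ t in Ioi u, f t ∂μ) ~[atTop] fun u => ∫ t in Ioi u, g t ∂μ := by
  refine (hfg.isLittleO.integral_Ioi hg hgi).congr' ?_ EventuallyEq.rfl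
  filter_upwards [hfi.eventually_integrableOn_Ioi, hgi.eventually_integrableOn_Ioi] with u hfu hgu
  exact integral_sub hfu hgu

theorem isLittleO_mul_rpow_mul_exp_neg_mul_rpow (a : ℝ) {c r q : ℝ} (hc : c ≠ 0) (hrq : r < q)
    (K α : ℝ) :
    (fun t : ℝ => a * t ^ r * exp (-K * t ^ α)) =o[atTop]
      fun t => c * t ^ q * exp (-K * t ^ α) := by
  have h : (fun t : ℝ => t ^ (r - q)) =o[atTop] fun _ => (1 : ℝ) :=
    (isLittleO_one_iff ℝ).2 (by simpa using tendsto_rpow_neg_atTop (sub_pos.2 hrq))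
  refine (((h.mul_isBigO (isBigO_refl (fun t => t ^ q * exp (-K * t ^ α)) atTop)).const_mul_left
    a).const_mul_right hc).congr' ?_ (Eventually.of_forall fun t => by ring)
  filter_upwards [eventually_gt_atTop 0] with t ht
  rw [← mul_assoc (t ^ (r - q)), ← rpow_add ht, sub_add_cancel, mul_assoc]

theorem hasDerivAt_rpow_mul_exp_neg_mul_rpow (p K α : ℝ) {x : ℝ} (hx : 0 < x) :
    HasDerivAt (fun y => y ^ p * exp (-K * y ^ α))
      ((p * x ^ (p - 1) - K * α * x ^ (p + α - 1)) * exp (-K * x ^ α)) x := by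
  have hpow : HasDerivAt (fun y => -K * y ^ α) (-K * (α * x ^ (α - 1))) x :=
    (hasDerivAt_rpow_const (Or.inl hx.ne')).const_mul _
  refine ((hasDerivAt_rpow_const (Or.inl hx.ne')).mul hpow.exp).congr_deriv ?_
  rw [show p + α - 1 = p + (α - 1) by ring, rpow_add hx]
  ring

theorem integral_Ioi_rpow_mul_exp_neg_mul_rpow_eventuallyEq (p : ℝ) {K α : ℝ} (hK : 0 < K)
    (hα : 0 < α) :
    (fun u => ∫ t in Ioi u, (K * α * t ^ (p + α - 1) - p * t ^ (p - 1)) * exp (-K * t ^ α))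
      =ᶠ[atTop] fun u => u ^ p * exp (-K * u ^ α) := by
  have hint : IntegrableAtFilter
      (fun t => (K * α * t ^ (p + α - 1) - p * t ^ (p - 1)) * exp (-K * t ^ α)) atTop :=
    ((integrableAtFilter_mul_rpow_mul_exp_neg_mul_rpow (K * α) (p + α - 1) hK hα).sub
      (integrableAtFilter_mul_rpow_mul_exp_neg_mul_rpow p (p - 1) hK hα)).congr
      (Eventually.of_forall fun t => by simp only [Pi.sub_apply]; ring)
  filter_upwards [eventually_gt_atTop 0, hint.eventually_integrableOn_Ioi] with u hu hu_int
  have hderiv (x : ℝ) (hx : x ∈ Ici u) : HasDerivAt (fun y => -(y ^ p * exp (-K * y ^ α)))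
      ((K * α * x ^ (p + α - 1) - p * x ^ (p - 1)) * exp (-K * x ^ α)) x :=
    (hasDerivAt_rpow_mul_exp_neg_mul_rpow p K α (hu.trans_le hx)).neg.congr_deriv (by ring)
  simpa using integral_Ioi_of_hasDerivAt_of_tendsto' hderiv hu_int
    (tendsto_rpow_mul_exp_neg_mul_rpow_atTop_nhds_zero p hK hα).neg

theorem eventually_nonneg_mul_rpow_mul_exp {c : ℝ} (hc : 0 ≤ c) (q K α : ℝ) :
    0 ≤ᶠ[atTop] fun t : ℝ => c * t ^ q * exp (-K * t ^ α) := by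
  filter_upwards [eventually_gt_atTop 0] with t ht
  have := rpow_pos_of_pos ht q
  positivity

theorem isEquivalent_integral_Ioi_mul_rpow_mul_exp_neg_mul_rpow {c : ℝ} (hc : 0 < c) (q : ℝ)
    {K α : ℝ} (hK : 0 < K) (hα : 0 < α) :
    (fun u => ∫ t in Ioi u, c * t ^ q * exp (-K * t ^ α))
      ~[atTop] fun u => c * α⁻¹ * K⁻¹ * u ^ (q + 1 - α) * exp (-K * u ^ α) := by
  set p := q + 1 - α
  set g := fun t : ℝ => c * t ^ q * exp (-K * t ^ α)
  set φ := fun t : ℝ =>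
    c * α⁻¹ * K⁻¹ * ((K * α * t ^ (p + α - 1) - p * t ^ (p - 1)) * exp (-K * t ^ α))
  have hφ : φ = g - fun t => c * α⁻¹ * K⁻¹ * p * t ^ (q - α) * exp (-K * t ^ α) := by
    ext t
    simp only [φ, g, Pi.sub_apply]
    rw [show p + α - 1 = q by ring, show p - 1 = q - α by ring]
    field_simp
  have hφg : φ ~[atTop] g := hφ ▸ IsEquivalent.refl.sub_isLittleO
    (isLittleO_mul_rpow_mul_exp_neg_mul_rpow _ hc.ne' (sub_lt_self q hα) K α)
  have hφi : IntegrableAtFilter φ atTop := hφ ▸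
    (integrableAtFilter_mul_rpow_mul_exp_neg_mul_rpow c q hK hα).sub
      (integrableAtFilter_mul_rpow_mul_exp_neg_mul_rpow _ (q - α) hK hα)
  refine (hφg.integral_Ioi (eventually_nonneg_mul_rpow_mul_exp hc.le q K α) hφi
    (integrableAtFilter_mul_rpow_mul_exp_neg_mul_rpow c q hK hα)).symm.trans
    (EventuallyEq.isEquivalent ?_)
  filter_upwards [integral_Ioi_rpow_mul_exp_neg_mul_rpow_eventuallyEq p hK hα] with u hu
  simp only [φ, integral_const_mul, hu]
  ring

theorem tail_from_density_exp_power_general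
    {Ω : Type*} [MeasurableSpace Ω] (μ : Measure Ω)
    (X : Ω → ℝ)
    (u₀ : ℝ) (fX : ℝ → ℝ) (hfXm : Measurable fX)
    (hdens : ∀ s : Set ℝ, MeasurableSet s → s ⊆ Set.Ioi u₀ →
      (μ {ω | X ω ∈ s}).toReal = ∫ u in s, fX u)
    (CX KX α β : ℝ) (hCX : 0 < CX) (hKX : 0 < KX) (hα : 0 < α)
    (hf : fX ~[atTop] fun u => CX * u ^ β * Real.exp (-KX * u ^ α)) :
    (fun u => (μ {ω | X ω > u}).toReal)
      ~[atTop] fun u =>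
        CX * α⁻¹ * KX⁻¹ * u ^ (β + 1 - α) * Real.exp (-KX * u ^ α) := by
  have htail : (fun u => (μ {ω | X ω > u}).toReal) =ᶠ[atTop] fun u => ∫ t in Ioi u, fX t := by
    filter_upwards [eventually_ge_atTop u₀] with u hu
    exact hdens (Ioi u) measurableSet_Ioi (Ioi_subset_Ioi hu)
  have hg := eventually_nonneg_mul_rpow_mul_exp hCX.le β KX α
  have hgi := integrableAtFilter_mul_rpow_mul_exp_neg_mul_rpow CX β hKX hα
  have hfXi : IntegrableAtFilter fX atTop :=
    hf.isBigO.integrableAtFilter hfXm.aestronglyMeasurable.stronglyMeasurableAtFilter hgi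
  exact htail.isEquivalent.trans ((hf.integral_Ioi hg hfXi hgi).trans
    (isEquivalent_integral_Ioi_mul_rpow_mul_exp_neg_mul_rpow hCX β hKX hα))

theorem tail_from_density_exp_power
    {Ω : Type*} [MeasurableSpace Ω] (μ : Measure Ω) [IsProbabilityMeasure μ]
    (X : Ω → ℝ) (hXm : Measurable X)
    (hesssup : ∀ u : ℝ, μ {ω | X ω > u} ≠ 0)
    (u₀ : ℝ) (fX : ℝ → ℝ) (hfXm : Measurable fX)
    (hdens : ∀ s : Set ℝ, MeasurableSet s → s ⊆ Set.Ioi u₀ →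
      (μ {ω | X ω ∈ s}).toReal = ∫ u in s, fX u)
    (CX KX α β : ℝ) (hCX : 0 < CX) (hKX : 0 < KX) (hα : 0 < α)
    (hf : fX ~[atTop] fun u => CX * u ^ β * Real.exp (-KX * u ^ α)) :
    (fun u => (μ {ω | X ω > u}).toReal)
      ~[atTop] fun u =>
        CX * α⁻¹ * KX⁻¹ * u ^ (β + 1 - α) * Real.exp (-KX * u ^ α) :=
  tail_from_density_exp_power_general μ X u₀ fX hfXm hdens CX KX α β hCX hKX hα hf
end

section
/- Let a > 0, μ > 0, and let f, S : [0, a] → ℝ be continuous with f(0) ≠ 0, where S attains its minimum over [0,a] only at 0, S is C¹ on [0, δ₀] for some δ₀ ∈ (0, a], and S'(0) > 0. Then ∫_0^a x^{μ-1} f(x) e^{-u S(x)} dx ~ Γ(μ) f(0) S'(0)^{-μ} u^{-μ} e^{-u S(0)} as u → ∞. -/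
/-!
Write `S x - S 0 = φ x`. The substitution `x = t / u` turns `u ^ μ e^{u S 0}` times the integral
into `∫₀^{ua} t^{μ-1} f(t/u) e^{-u φ(t/u)} dt`. Since `φ(0) = 0` and `φ'(0) = A > 0`, the
exponent `u φ(t/u)` tends to `A t`; since moreover `φ > 0` on `(0, a]`, it dominates `c t` for
some `c > 0`, which gives the integrable majorant `M t^{μ-1} e^{-c t}`. Dominated convergence
then yields the limit `f 0 ∫₀^∞ t^{μ-1} e^{-A t} dt = Γ(μ) f(0) A^{-μ}`.
-/

open Filter Asymptotics Set MeasureTheory Topology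

theorem Asymptotics.isEquivalent_const_mul_of_tendsto {α β : Type*} [NormedField β]
    {l : Filter α} {f g h : α → β} {c : β} (hc : c ≠ 0) (hg : Tendsto g l (𝓝 c))
    (hf : f =ᶠ[l] g * h) : f ~[l] fun x => c * h x :=
  (((isEquivalent_const_iff_tendsto hc).2 hg).mul IsEquivalent.refl).congr_left hf.symm

section LinearOrderedField

variable {𝕜 : Type*} [Field 𝕜] [LinearOrder 𝕜] [IsStrictOrderedRing 𝕜]

theorem tendsto_div_atTop_nhdsGT_zero [TopologicalSpace 𝕜] [OrderTopology 𝕜] {t : 𝕜}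
    (ht : 0 < t) : Tendsto (fun u : 𝕜 => t / u) atTop (𝓝[>] 0) :=
  tendsto_nhdsWithin_iff.2 ⟨tendsto_const_nhds.div_atTop tendsto_id,
    (eventually_gt_atTop 0).mono fun _ hu => div_pos ht hu⟩

theorem mapsTo_div_Ioc_Icc {a u : 𝕜} (hu : 0 < u) : MapsTo (· / u) (Ioc 0 (u * a)) (Icc 0 a) :=
  fun _ ht => ⟨div_nonneg ht.1.le hu.le, (div_le_iff₀ hu).2 (by rw [mul_comm]; exact ht.2)⟩

end LinearOrderedField

theorem rpow_mul_integral_eq_integral_comp_div {μ a u : ℝ} (G : ℝ → ℝ) (ha : 0 ≤ a)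
    (hu : 0 < u) :
    u ^ μ * ∫ x in 0..a, x ^ (μ - 1) * G x = ∫ t in 0..u * a, t ^ (μ - 1) * G (t / u) := by
  have hscale : ∀ t ∈ uIcc 0 (u * a),
      t ^ (μ - 1) * G (t / u) = u ^ (μ - 1) * ((t / u) ^ (μ - 1) * G (t / u)) := by
    intro t ht
    rw [uIcc_of_le (by positivity)] at ht
    rw [Real.div_rpow ht.1 hu.le]
    field_simp [(Real.rpow_pos_of_pos hu (μ - 1)).ne']
  rw [intervalIntegral.integral_congr hscale, intervalIntegral.integral_const_mul,
    intervalIntegral.integral_comp_div (fun x => x ^ (μ - 1) * G x) hu.ne', zero_div,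
    mul_div_cancel_left₀ a hu.ne', smul_eq_mul, ← mul_assoc, ← Real.rpow_add_one hu.ne',
    sub_add_cancel]

section SlopeAtZero

variable {φ : ℝ → ℝ} {A : ℝ}

theorem tendsto_mul_comp_div_of_hasDerivWithinAt (hφ0 : φ 0 = 0)
    (hφ' : HasDerivWithinAt φ A (Ioi 0) 0) {t : ℝ} (ht : 0 < t) :
    Tendsto (fun u : ℝ => u * φ (t / u)) atTop (𝓝 (A * t)) := by
  have hslope := (hasDerivWithinAt_iff_tendsto_slope' (lt_irrefl 0)).1 hφ'
  refine ((hslope.comp (tendsto_div_atTop_nhdsGT_zero ht)).mul_const t).congr' ?_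
  filter_upwards [eventually_gt_atTop 0] with u hu
  simp only [Function.comp_apply, slope_def_field, hφ0, sub_zero]
  field_simp

theorem exists_mul_le_of_hasDerivWithinAt {a : ℝ} (hφ : ContinuousOn φ (Icc 0 a))
    (hφ0 : φ 0 = 0) (hpos : ∀ x ∈ Ioc 0 a, 0 < φ x) (hA : 0 < A)
    (hφ' : HasDerivWithinAt φ A (Ioi 0) 0) :
    ∃ c > 0, ∀ x ∈ Icc 0 a, c * x ≤ φ x := by
  have hslope := (hasDerivWithinAt_iff_tendsto_slope' (lt_irrefl 0)).1 hφ'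
  obtain ⟨δ, hδ, hnear⟩ := mem_nhdsGT_iff_exists_Ioo_subset.1
    (hslope.eventually (eventually_gt_nhds (half_lt_self hA)))
  have hfar_pos : ∀ x ∈ Icc δ a, 0 < x := fun x hx => hδ.trans_le hx.1
  obtain ⟨m, hm, hfar⟩ : ∃ m > 0, ∀ x ∈ Icc δ a, m ≤ φ x / x :=
    isCompact_Icc.exists_forall_le'
      ((hφ.mono (Icc_subset_Icc hδ.le le_rfl)).div continuousOn_id
        fun x hx => (hfar_pos x hx).ne')
      fun x hx => div_pos (hpos x ⟨hfar_pos x hx, hx.2⟩) (hfar_pos x hx)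
  refine ⟨min (A / 2) m, lt_min (half_pos hA) hm, fun x hx => ?_⟩
  rcases hx.1.eq_or_lt with rfl | hx0
  · simp [hφ0]
  rw [← le_div_iff₀ hx0]
  rcases lt_or_ge x δ with hxδ | hxδ
  · have hslope_x := hnear ⟨hx0, hxδ⟩
    simp only [mem_ofPred_eq, slope_def_field, hφ0, sub_zero] at hslope_x
    exact (min_le_left _ _).trans hslope_x.le
  · exact (min_le_right _ _).trans (hfar x ⟨hxδ, hx.2⟩)

end SlopeAtZero

/-- The integrand of `u ^ μ * ∫₀^a x^{μ-1} g(x) e^{-u φ(x)} dx` after the substitution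
`x = t / u`, extended by zero beyond `t = u a`. -/
noncomputable def scaledLaplaceIntegrand (μ a : ℝ) (g φ : ℝ → ℝ) (u : ℝ) :
    ℝ → ℝ :=
  (Iic (u * a)).indicator fun t => t ^ (μ - 1) * (g (t / u) * Real.exp (-u * φ (t / u)))

section ScaledLaplaceIntegrand

variable {μ a : ℝ} {g φ : ℝ → ℝ}

theorem rpow_mul_integral_eq_integral_scaledLaplaceIntegrand (ha : 0 ≤ a) {u : ℝ} (hu : 0 < u) :
    u ^ μ * ∫ x in 0..a, x ^ (μ - 1) * (g x * Real.exp (-u * φ x))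
      = ∫ t in Ioi 0, scaledLaplaceIntegrand μ a g φ u t := by
  rw [rpow_mul_integral_eq_integral_comp_div _ ha hu,
    intervalIntegral.integral_of_le (by positivity), scaledLaplaceIntegrand,
    setIntegral_indicator measurableSet_Iic, Ioi_inter_Iic]

theorem aestronglyMeasurable_scaledLaplaceIntegrand (hg : ContinuousOn g (Icc 0 a))
    (hφ : ContinuousOn φ (Icc 0 a)) {u : ℝ} (hu : 0 < u) :
    AEStronglyMeasurable (scaledLaplaceIntegrand μ a g φ u) (volume.restrict (Ioi 0)) := by
  rw [scaledLaplaceIntegrand, aestronglyMeasurable_indicator_iff measurableSet_Iic,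
    Measure.restrict_restrict measurableSet_Iic, inter_comm, Ioi_inter_Iic]
  have hdiv : ContinuousOn (· / u) (Ioc 0 (u * a)) := continuousOn_id.div_const u
  exact ((continuousOn_id.rpow_const fun t ht => Or.inl ht.1.ne').mul
    ((hg.comp hdiv (mapsTo_div_Ioc_Icc hu)).mul (Real.continuous_exp.comp_continuousOn
      (continuousOn_const.mul (hφ.comp hdiv (mapsTo_div_Ioc_Icc hu)))))).aestronglyMeasurable
    measurableSet_Ioc

theorem norm_scaledLaplaceIntegrand_le {c M : ℝ} (hM : ∀ x ∈ Icc 0 a, ‖g x‖ ≤ M)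
    (hM0 : 0 ≤ M) (hlow : ∀ x ∈ Icc 0 a, c * x ≤ φ x) {u t : ℝ} (hu : 0 < u)
    (ht : 0 < t) :
    ‖scaledLaplaceIntegrand μ a g φ u t‖ ≤ M * (t ^ (μ - 1) * Real.exp (-c * t)) := by
  by_cases htu : t ∈ Iic (u * a)
  · have hx := mapsTo_div_Ioc_Icc hu ⟨ht, htu⟩
    have hexp : -u * φ (t / u) ≤ -c * t := by
      have := mul_le_mul_of_nonneg_left (hlow _ hx) hu.le
      rw [mul_left_comm, mul_div_cancel₀ t hu.ne'] at this
      linarith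
    rw [scaledLaplaceIntegrand, indicator_of_mem htu, norm_mul, norm_mul,
      Real.norm_of_nonneg (by positivity), Real.norm_of_nonneg (Real.exp_pos _).le,
      mul_left_comm]
    exact mul_le_mul (hM _ hx) (by gcongr) (by positivity) hM0
  · rw [scaledLaplaceIntegrand, indicator_of_notMem htu, norm_zero]
    positivity

theorem tendsto_scaledLaplaceIntegrand {A : ℝ} (ha : 0 < a) (hg : ContinuousOn g (Icc 0 a))
    (hφ0 : φ 0 = 0) (hφ' : HasDerivWithinAt φ A (Ioi 0) 0) {t : ℝ} (ht : 0 < t) :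
    Tendsto (fun u => scaledLaplaceIntegrand μ a g φ u t) atTop
      (𝓝 (t ^ (μ - 1) * (g 0 * Real.exp (-(A * t))))) := by
  have hg_lim : Tendsto (fun u => g (t / u)) atTop (𝓝 (g 0)) :=
    ((hg 0 ⟨le_rfl, ha.le⟩).mono_of_mem_nhdsWithin
      (mem_of_superset (Ioo_mem_nhdsGT ha) Ioo_subset_Icc_self)).tendsto.comp
      (tendsto_div_atTop_nhdsGT_zero ht)
  have hexp_lim := (Real.continuous_exp.tendsto _).comp
    (tendsto_mul_comp_div_of_hasDerivWithinAt hφ0 hφ' ht).neg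
  refine (tendsto_const_nhds.mul (hg_lim.mul hexp_lim)).congr' ?_
  filter_upwards [eventually_ge_atTop (t / a)] with u hu
  have htu : t ∈ Iic (u * a) := (div_le_iff₀ ha).1 hu
  rw [scaledLaplaceIntegrand, indicator_of_mem htu]
  simp only [Function.comp_apply, neg_mul]

theorem tendsto_rpow_mul_integral_rpow_mul_exp_neg_mul {c A : ℝ} (ha : 0 < a) (hμ : 0 < μ)
    (hc : 0 < c) (hA : 0 < A) (hg : ContinuousOn g (Icc 0 a)) (hφ : ContinuousOn φ (Icc 0 a))
    (hφ0 : φ 0 = 0) (hφ' : HasDerivWithinAt φ A (Ioi 0) 0)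
    (hlow : ∀ x ∈ Icc 0 a, c * x ≤ φ x) :
    Tendsto (fun u => u ^ μ * ∫ x in 0..a, x ^ (μ - 1) * (g x * Real.exp (-u * φ x))) atTop
      (𝓝 (Real.Gamma μ * g 0 * A ^ (-μ))) := by
  obtain ⟨M, hM⟩ := isCompact_Icc.exists_bound_of_continuousOn hg
  have hM0 : 0 ≤ M := (norm_nonneg _).trans (hM 0 ⟨le_rfl, ha.le⟩)
  have hmajorant : Integrable (fun t => M * (t ^ (μ - 1) * Real.exp (-c * t)))
      (volume.restrict (Ioi 0)) := by
    simpa only [Real.rpow_one] using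
      (integrableOn_rpow_mul_exp_neg_mul_rpow (by linarith) one_pos hc).const_mul M
  have hlim := tendsto_integral_filter_of_dominated_convergence _
    ((eventually_gt_atTop 0).mono fun u hu =>
      aestronglyMeasurable_scaledLaplaceIntegrand hg hφ hu)
    ((eventually_gt_atTop 0).mono fun u hu => (ae_restrict_mem measurableSet_Ioi).mono
      fun t ht => norm_scaledLaplaceIntegrand_le hM hM0 hlow hu ht)
    hmajorant
    ((ae_restrict_mem measurableSet_Ioi).mono fun t ht =>
      tendsto_scaledLaplaceIntegrand (μ := μ) ha hg hφ0 hφ' ht)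
  have hvalue : ∫ t in Ioi 0, t ^ (μ - 1) * (g 0 * Real.exp (-(A * t)))
      = Real.Gamma μ * g 0 * A ^ (-μ) := by
    simp_rw [mul_left_comm _ (g 0), integral_const_mul,
      Real.integral_rpow_mul_exp_neg_mul_Ioi hμ hA, one_div, Real.inv_rpow hA.le,
      Real.rpow_neg hA.le]
    ring
  rw [hvalue] at hlim
  exact hlim.congr' ((eventually_gt_atTop 0).mono fun u hu =>
    (rpow_mul_integral_eq_integral_scaledLaplaceIntegrand ha.le hu).symm)

end ScaledLaplaceIntegrand

theorem watson_laplace_asymptotics_general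
    (a mu δ₀ : ℝ) (ha : 0 < a) (hmu : 0 < mu) (hδ₀ : δ₀ ∈ Set.Ioc (0:ℝ) a)
    (f S : ℝ → ℝ)
    (hf : ContinuousOn f (Set.Icc 0 a)) (hS : ContinuousOn S (Set.Icc 0 a))
    (hf0 : f 0 ≠ 0)
    (hmin : ∀ x ∈ Set.Icc (0:ℝ) a, x ≠ 0 → S 0 < S x)
    (hS'pos : 0 < derivWithin S (Set.Icc 0 δ₀) 0) :
    (fun u : ℝ => ∫ x in (0:ℝ)..a, x ^ (mu - 1) * f x * Real.exp (-u * S x))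
      ~[atTop] fun u =>
        Real.Gamma mu * f 0 * (derivWithin S (Set.Icc 0 δ₀) 0) ^ (-mu) *
          u ^ (-mu) * Real.exp (-u * S 0) := by
  set A := derivWithin S (Icc 0 δ₀) 0
  have hφ' : HasDerivWithinAt (fun x => S x - S 0) A (Ioi 0) 0 :=
    ((differentiableWithinAt_of_derivWithin_ne_zero hS'pos.ne').hasDerivWithinAt.sub_const
      (S 0)).mono_of_mem_nhdsWithin (mem_of_superset (Ioo_mem_nhdsGT hδ₀.1) Ioo_subset_Icc_self)
  have hφ : ContinuousOn (fun x => S x - S 0) (Icc 0 a) := hS.sub continuousOn_const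
  obtain ⟨c, hc, hlow⟩ := exists_mul_le_of_hasDerivWithinAt hφ (sub_self _)
    (fun x hx => sub_pos.2 (hmin x (Ioc_subset_Icc_self hx) hx.1.ne')) hS'pos hφ'
  have hlim := tendsto_rpow_mul_integral_rpow_mul_exp_neg_mul ha hmu hc hS'pos hf hφ
    (sub_self _) hφ' hlow
  have hC : Real.Gamma mu * f 0 * A ^ (-mu) ≠ 0 :=
    mul_ne_zero (mul_ne_zero (Real.Gamma_pos_of_pos hmu).ne' hf0)
      (Real.rpow_pos_of_pos hS'pos _).ne'
  refine (isEquivalent_const_mul_of_tendsto hC hlim ?_).congr_right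
    (Eventually.of_forall fun u => (mul_assoc _ _ _).symm)
  filter_upwards [eventually_gt_atTop 0] with u hu
  have hsplit : ∀ x, x ^ (mu - 1) * f x * Real.exp (-u * S x)
      = x ^ (mu - 1) * (f x * Real.exp (-u * (S x - S 0))) * Real.exp (-u * S 0) := by
    intro x
    rw [mul_assoc _ (f x), mul_assoc, mul_assoc, ← Real.exp_add]
    ring_nf
  simp only [Pi.mul_apply, hsplit, intervalIntegral.integral_mul_const]
  rw [Real.rpow_neg hu.le]
  field_simp

theorem watson_laplace_asymptotics
    (a mu δ₀ : ℝ) (ha : 0 < a) (hmu : 0 < mu) (hδ₀ : δ₀ ∈ Set.Ioc (0:ℝ) a)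
    (f S : ℝ → ℝ)
    (hf : ContinuousOn f (Set.Icc 0 a)) (hS : ContinuousOn S (Set.Icc 0 a))
    (hf0 : f 0 ≠ 0)
    (hmin : ∀ x ∈ Set.Icc (0:ℝ) a, x ≠ 0 → S 0 < S x)
    (hC1 : ContDiffOn ℝ 1 S (Set.Icc 0 δ₀))
    (hS'pos : 0 < derivWithin S (Set.Icc 0 δ₀) 0) :
    (fun u : ℝ => ∫ x in (0:ℝ)..a, x ^ (mu - 1) * f x * Real.exp (-u * S x))
      ~[atTop] fun u =>
        Real.Gamma mu * f 0 * (derivWithin S (Set.Icc 0 δ₀) 0) ^ (-mu) *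
          u ^ (-mu) * Real.exp (-u * S 0) :=
  watson_laplace_asymptotics_general a mu δ₀ ha hmu hδ₀ f S hf hS hf0 hmin hS'pos
end
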